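/- Let U ⊆ ℝ² be open, Γ a torsion-free affine connection on U with projective Schouten tensor P, Λ ≠ 0 real, and let K be a projective vector field on U with one-form ρ, i.e. (ℒ_K Γ)^k_{ij} = δ^k_i ρ_j + δ^k_j ρ_i for a smooth one-form ρ. Define on U×ℝ² the vector field 𝒦 = Σ_i K^i ∂_{x^i} + Σ_i (−Σ_j ξ_j ∂_i K^j + Λ^{-1} ρ_i) ∂_{ξ_i}, the metric g with components g(∂_{ξ_i},∂_{x^j}) = ½δ_{ij}, g(∂_{x^i},∂_{x^j}) = −Σ_k Γ^k_{ij}ξ_k + Λξ_iξ_j + Λ^{-1}P_{(ij)}, g(∂_{ξ_i},∂_{ξ_j}) = 0, and the 2-form Ω with Ω(∂_{ξ_i},∂_{x^j}) = δ_{ij} = −Ω(∂_{x^j},∂_{ξ_i}), Ω(∂_{x^1},∂_{x^2}) = Λ^{-1}(P_{12} − P_{21}), all other components zero. Then 𝒦 is a Killing vector field for g which is also symplectic for Ω: ℒ_𝒦 g = 0 and ℒ_𝒦 Ω = 0 on U×ℝ². -/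

import Mathlib

noncomputable section
open Matrix

/-- Points of the plane. -/
abbrev Pt2 : Type := Fin 2 → ℝ
/-- Points of the 4-manifold `U × ℝ²`, coordinates `(x¹, x², ξ₁, ξ₂)`. -/
abbrev Pt4 : Type := Fin 4 → ℝ

/-- Partial derivative of a function on the plane. -/
def pd2 (i : Fin 2) (f : Pt2 → ℝ) (x : Pt2) : ℝ := fderiv ℝ f x (Pi.single i 1)
/-- Partial derivative of a function on `ℝ⁴`. -/
def pd4 (a : Fin 4) (f : Pt4 → ℝ) (p : Pt4) : ℝ := fderiv ℝ f p (Pi.single a 1)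

/-- Base point `(x¹,x²)` of a point of `U × ℝ²`. -/
def bpt (p : Pt4) : Pt2 := ![p 0, p 1]
/-- Fibre coordinates `(ξ₁,ξ₂)` of a point of `U × ℝ²`. -/
def fib (p : Pt4) : Fin 2 → ℝ := ![p 2, p 3]

/-- An affine connection: `conn k i j` is the Christoffel symbol `Γ^k_{ij}`. -/
abbrev Conn : Type := Fin 2 → Fin 2 → Fin 2 → Pt2 → ℝ

/-- Curvature `R_{ij}{}^k{}_l` of a connection. -/
def curv (Γ : Conn) (i j k l : Fin 2) (x : Pt2) : ℝ :=
  pd2 i (Γ k j l) x - pd2 j (Γ k i l) x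
    + ∑ m, (Γ k i m x * Γ m j l x - Γ k j m x * Γ m i l x)

/-- Ricci tensor `R_{jl} = R_{kj}{}^k{}_l`. -/
def ricciT (Γ : Conn) (j l : Fin 2) (x : Pt2) : ℝ := ∑ k, curv Γ k j k l x

/-- Projective Schouten tensor `P_{ij} = R_{(ij)} + (1/3) R_{[ij]}`. -/
def schouten (Γ : Conn) (i j : Fin 2) (x : Pt2) : ℝ :=
  (ricciT Γ i j x + ricciT Γ j i x) / 2 + (ricciT Γ i j x - ricciT Γ j i x) / 6

/-- The Einstein lift metric with parameter `Λ`: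
`g(∂_{ξ_i},∂_{x^j}) = ½δ_{ij}`, `g(∂_{x^i},∂_{x^j}) = −Σ_k Γ^k_{ij}ξ_k + Λξ_iξ_j + Λ⁻¹P_{(ij)}`,
`g(∂_{ξ_i},∂_{ξ_j}) = 0`. -/
def einsteinLift (Γ : Conn) (Λ : ℝ) (p : Pt4) : Matrix (Fin 4) (Fin 4) ℝ :=
  let A : Fin 2 → Fin 2 → ℝ := fun i j =>
    -(∑ k, Γ k i j (bpt p) * fib p k) + Λ * fib p i * fib p j
      + Λ⁻¹ * ((schouten Γ i j (bpt p) + schouten Γ j i (bpt p)) / 2)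
  !![A 0 0, A 0 1, 1/2, 0;
     A 1 0, A 1 1, 0, 1/2;
     1/2, 0, 0, 0;
     0, 1/2, 0, 0]

/-- The charged symplectic form `Ω = dξ_i∧dx^i + Λ⁻¹ P_{ij} dx^i∧dx^j`:
`Ω(∂_{ξ_i},∂_{x^j}) = δ_{ij} = −Ω(∂_{x^j},∂_{ξ_i})`,
`Ω(∂_{x^1},∂_{x^2}) = Λ⁻¹(P_{12} − P_{21})`, all other components zero. -/
def chargedSymp (Γ : Conn) (Λ : ℝ) (p : Pt4) : Matrix (Fin 4) (Fin 4) ℝ :=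
  let q : ℝ := Λ⁻¹ * (schouten Γ 0 1 (bpt p) - schouten Γ 1 0 (bpt p))
  !![0, q, -1, 0;
     -q, 0, 0, -1;
     1, 0, 0, 0;
     0, 1, 0, 0]

/-- Lie derivative `(ℒ_X T)_{ab} = Σ_c (X^c ∂_c T_{ab} + T_{cb} ∂_a X^c + T_{ac} ∂_b X^c)`
of a covariant 2-tensor (or 2-form) on an open subset of `ℝ⁴`. -/
def lieT (X : Fin 4 → Pt4 → ℝ) (T : Pt4 → Matrix (Fin 4) (Fin 4) ℝ)
    (a b : Fin 4) (p : Pt4) : ℝ :=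
  ∑ c, (X c p * pd4 c (fun q => T q a b) p
    + T p c b * pd4 a (X c) p + T p a c * pd4 b (X c) p)

/-- Lie derivative of a connection along a vector field `K` on the plane. -/
def lieConn (Γ : Conn) (K : Fin 2 → Pt2 → ℝ) (k i j : Fin 2) (x : Pt2) : ℝ :=
  pd2 i (fun y => pd2 j (K k) y) x
    + ∑ m, (K m x * pd2 m (Γ k i j) x - Γ m i j x * pd2 m (K k) x
        + Γ k i m x * pd2 j (K m) x + Γ k j m x * pd2 i (K m) x)

/-- The lift `𝒦 = Σ_i K^i ∂_{x^i} + Σ_i (−Σ_j ξ_j ∂_i K^j + Λ⁻¹ρ_i) ∂_{ξ_i}` of a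
projective vector field `K` with one-form `ρ` to `U × ℝ²`. -/
def projLift (K : Fin 2 → Pt2 → ℝ) (ρ : Fin 2 → Pt2 → ℝ) (Λ : ℝ) :
    Fin 4 → Pt4 → ℝ :=
  ![fun p => K 0 (bpt p),
    fun p => K 1 (bpt p),
    fun p => -(∑ j, fib p j * pd2 0 (K j) (bpt p)) + Λ⁻¹ * ρ 0 (bpt p),
    fun p => -(∑ j, fib p j * pd2 1 (K j) (bpt p)) + Λ⁻¹ * ρ 1 (bpt p)]


/-! ### Helper machinery -/

def bptL : Pt4 →L[ℝ] Pt2 :=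
  ContinuousLinearMap.pi ![ContinuousLinearMap.proj 0, ContinuousLinearMap.proj 1]

lemma EL_bpt_eq (q : Pt4) : bpt q = bptL q := by
  funext i; fin_cases i <;> simp [bpt, bptL]

lemma EL_hasFDerivAt_bpt (p : Pt4) : HasFDerivAt bpt bptL p := by
  have : bpt = ⇑bptL := funext EL_bpt_eq
  rw [this]; exact bptL.hasFDerivAt

lemma EL_pd4_hasFDerivAt {f : Pt4 → ℝ} {L : Pt4 →L[ℝ] ℝ} {p : Pt4}
    (h : HasFDerivAt f L p) (a : Fin 4) : pd4 a f p = L (Pi.single a 1) := by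
  rw [pd4, h.fderiv]

lemma EL_hasFDerivAt_bcomp {f : Pt2 → ℝ} {p : Pt4} (hf : DifferentiableAt ℝ f (bpt p)) :
    HasFDerivAt (fun q => f (bpt q)) ((fderiv ℝ f (bpt p)).comp bptL) p :=
  (hf.hasFDerivAt).comp p (EL_hasFDerivAt_bpt p)

def coordL (i : Fin 4) : Pt4 →L[ℝ] ℝ := ContinuousLinearMap.proj i

lemma EL_hasFDerivAt_coord (p : Pt4) (i : Fin 4) :
    HasFDerivAt (fun q : Pt4 => q i) (coordL i) p :=
  (coordL i).hasFDerivAt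

lemma bptL_single0 : bptL (Pi.single (0:Fin 4) 1) = Pi.single (0:Fin 2) 1 := by
  funext i; fin_cases i <;> simp [bptL, Pi.single_apply]
lemma bptL_single1 : bptL (Pi.single (1:Fin 4) 1) = Pi.single (1:Fin 2) 1 := by
  funext i; fin_cases i <;> simp [bptL, Pi.single_apply]
lemma bptL_single2 : bptL (Pi.single (2:Fin 4) 1) = 0 := by
  funext i; fin_cases i <;> simp [bptL, Pi.single_apply]
lemma bptL_single3 : bptL (Pi.single (3:Fin 4) 1) = 0 := by
  funext i; fin_cases i <;> simp [bptL, Pi.single_apply]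

lemma pd2_const (i : Fin 2) (c : ℝ) (x : Pt2) : pd2 i (fun _ => c) x = 0 := by
  simp [pd2]
lemma pd2_add {f g : Pt2 → ℝ} {x : Pt2} (hf : DifferentiableAt ℝ f x)
    (hg : DifferentiableAt ℝ g x) (i : Fin 2) :
    pd2 i (fun y => f y + g y) x = pd2 i f x + pd2 i g x := by
  simp [pd2, fderiv_fun_add hf hg]
lemma pd2_sub {f g : Pt2 → ℝ} {x : Pt2} (hf : DifferentiableAt ℝ f x)
    (hg : DifferentiableAt ℝ g x) (i : Fin 2) :
    pd2 i (fun y => f y - g y) x = pd2 i f x - pd2 i g x := by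
  simp [pd2, fderiv_fun_sub hf hg]
lemma pd2_neg {f : Pt2 → ℝ} {x : Pt2} (i : Fin 2) :
    pd2 i (fun y => -f y) x = -pd2 i f x := by
  simp [pd2, fderiv_neg]
lemma pd2_mul {f g : Pt2 → ℝ} {x : Pt2} (hf : DifferentiableAt ℝ f x)
    (hg : DifferentiableAt ℝ g x) (i : Fin 2) :
    pd2 i (fun y => f y * g y) x = pd2 i f x * g x + f x * pd2 i g x := by
  simp [pd2, fderiv_fun_mul hf hg]; ring
lemma pd2_div_const {f : Pt2 → ℝ} {x : Pt2} (hf : DifferentiableAt ℝ f x) (c : ℝ) (i : Fin 2) :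
    pd2 i (fun y => f y / c) x = pd2 i f x / c := by
  simp only [div_eq_mul_inv, pd2]
  rw [fderiv_mul_const hf]
  simp [mul_comm]
lemma pd2_const_mul {f : Pt2 → ℝ} {x : Pt2} (hf : DifferentiableAt ℝ f x) (c : ℝ) (i : Fin 2) :
    pd2 i (fun y => c * f y) x = c * pd2 i f x := by
  simp [pd2, fderiv_const_mul hf]
lemma pd2_congr_nhds {f g : Pt2 → ℝ} {x : Pt2} (h : f =ᶠ[nhds x] g) (i : Fin 2) :
    pd2 i f x = pd2 i g x := by
  rw [pd2, pd2, h.fderiv_eq]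

lemma contDiffAt_pd2 {f : Pt2 → ℝ} {x : Pt2} (hf : ContDiffAt ℝ (⊤ : ℕ∞) f x) (i : Fin 2) :
    ContDiffAt ℝ (⊤ : ℕ∞) (pd2 i f) x := by
  have h1 : ContDiffAt ℝ (⊤ : ℕ∞) (fderiv ℝ f) x := hf.fderiv_right (by simp)
  exact h1.clm_apply contDiffAt_const

lemma pd2_comm {f : Pt2 → ℝ} {x : Pt2} (hf : ContDiffAt ℝ (⊤ : ℕ∞) f x) (i j : Fin 2) :
    pd2 i (pd2 j f) x = pd2 j (pd2 i f) x := by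
  have h1 : ContDiffAt ℝ (⊤ : ℕ∞) (fderiv ℝ f) x := hf.fderiv_right (by simp)
  have hd : DifferentiableAt ℝ (fderiv ℝ f) x := h1.differentiableAt (by simp)
  have hs : IsSymmSndFDerivAt ℝ f x := hf.isSymmSndFDerivAt (by rw [minSmoothness_of_isRCLikeNormedField]; exact WithTop.coe_le_coe.mpr le_top)
  have expand : ∀ (i j : Fin 2), pd2 i (pd2 j f) x
      = fderiv ℝ (fderiv ℝ f) x (Pi.single i 1) (Pi.single j 1) := by
    intro i j
    have : pd2 i (pd2 j f) x
        = fderiv ℝ (fun y => (fderiv ℝ f y) (Pi.single j 1)) x (Pi.single i 1) := rfl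
    rw [this, fderiv_clm_apply hd (differentiableAt_const _)]
    simp
  rw [expand, expand, hs.eq]

lemma SHb {f : Pt2 → ℝ} {p : Pt4} (hf : DifferentiableAt ℝ f (bpt p)) (a : Fin 4) :
    pd4 a (fun q => f (bpt q)) p = fderiv ℝ f (bpt p) (bptL (Pi.single a 1)) := by
  rw [EL_pd4_hasFDerivAt (EL_hasFDerivAt_bcomp hf) a]; rfl

lemma SHc (c : ℝ) (p : Pt4) (a : Fin 4) : pd4 a (fun _ : Pt4 => c) p = 0 := by
  simp [pd4]

lemma SHcm (c : ℝ) {f : Pt2 → ℝ} {p : Pt4} (hf : DifferentiableAt ℝ f (bpt p)) (a : Fin 4) :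
    pd4 a (fun q => c * f (bpt q)) p = c * fderiv ℝ f (bpt p) (bptL (Pi.single a 1)) := by
  rw [EL_pd4_hasFDerivAt ((EL_hasFDerivAt_bcomp hf).const_mul c) a]
  simp [ContinuousLinearMap.comp_apply]

lemma SHcmNeg (c : ℝ) {f : Pt2 → ℝ} {p : Pt4} (hf : DifferentiableAt ℝ f (bpt p)) (a : Fin 4) :
    pd4 a (fun q => -(c * f (bpt q))) p
      = -(c * fderiv ℝ f (bpt p) (bptL (Pi.single a 1))) := by
  rw [EL_pd4_hasFDerivAt (f := fun q => -(c * f (bpt q))) ((EL_hasFDerivAt_bcomp hf).const_mul c).neg a]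
  simp [ContinuousLinearMap.comp_apply]

lemma SHg {u0 u1 s : Pt2 → ℝ} {p : Pt4} (Λ : ℝ)
    (h0 : DifferentiableAt ℝ u0 (bpt p)) (h1 : DifferentiableAt ℝ u1 (bpt p))
    (hs : DifferentiableAt ℝ s (bpt p)) (i' j' : Fin 4) (c : Fin 4) :
    pd4 c (fun q => -(u0 (bpt q) * q 2 + u1 (bpt q) * q 3) + Λ * q i' * q j'
        + Λ⁻¹ * s (bpt q)) p
    = -((u0 (bpt p) * (Pi.single c 1 : Pt4) 2
          + p 2 * fderiv ℝ u0 (bpt p) (bptL (Pi.single c 1)))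
        + (u1 (bpt p) * (Pi.single c 1 : Pt4) 3
          + p 3 * fderiv ℝ u1 (bpt p) (bptL (Pi.single c 1))))
      + (Λ * p i' * (Pi.single c 1 : Pt4) j' + p j' * (Λ * (Pi.single c 1 : Pt4) i'))
      + Λ⁻¹ * fderiv ℝ s (bpt p) (bptL (Pi.single c 1)) := by
  have H := ((((EL_hasFDerivAt_bcomp h0).mul (EL_hasFDerivAt_coord p 2)).add
      ((EL_hasFDerivAt_bcomp h1).mul (EL_hasFDerivAt_coord p 3))).neg.add
      (((EL_hasFDerivAt_coord p i').const_mul Λ).mul (EL_hasFDerivAt_coord p j'))).add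
      ((EL_hasFDerivAt_bcomp hs).const_mul Λ⁻¹)
  rw [EL_pd4_hasFDerivAt (f := fun q => -(u0 (bpt q) * q 2 + u1 (bpt q) * q 3) + Λ * q i' * q j'
      + Λ⁻¹ * s (bpt q)) H c]
  simp [ContinuousLinearMap.add_apply, ContinuousLinearMap.coe_smul', Pi.smul_apply,
    ContinuousLinearMap.neg_apply, ContinuousLinearMap.comp_apply,
    ContinuousLinearMap.proj_apply, smul_eq_mul, coordL]
  try ring

lemma SHX {v0 v1 w : Pt2 → ℝ} {p : Pt4} (c0 : ℝ)
    (h0 : DifferentiableAt ℝ v0 (bpt p)) (h1 : DifferentiableAt ℝ v1 (bpt p))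
    (hw : DifferentiableAt ℝ w (bpt p)) (a : Fin 4) :
    pd4 a (fun q => -(q 2 * v0 (bpt q) + q 3 * v1 (bpt q)) + c0 * w (bpt q)) p
    = -((p 2 * fderiv ℝ v0 (bpt p) (bptL (Pi.single a 1))
          + v0 (bpt p) * (Pi.single a 1 : Pt4) 2)
        + (p 3 * fderiv ℝ v1 (bpt p) (bptL (Pi.single a 1))
          + v1 (bpt p) * (Pi.single a 1 : Pt4) 3))
      + c0 * fderiv ℝ w (bpt p) (bptL (Pi.single a 1)) := by
  have H := ((((EL_hasFDerivAt_coord p 2).mul (EL_hasFDerivAt_bcomp h0)).add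
      ((EL_hasFDerivAt_coord p 3).mul (EL_hasFDerivAt_bcomp h1))).neg.add
      ((EL_hasFDerivAt_bcomp hw).const_mul c0))
  rw [EL_pd4_hasFDerivAt (f := fun q => -(q 2 * v0 (bpt q) + q 3 * v1 (bpt q)) + c0 * w (bpt q)) H a]
  simp [ContinuousLinearMap.add_apply, ContinuousLinearMap.coe_smul', Pi.smul_apply,
    ContinuousLinearMap.neg_apply, ContinuousLinearMap.comp_apply,
    ContinuousLinearMap.proj_apply, smul_eq_mul, coordL]
  try ring

set_option maxHeartbeats 2000000 in
/-- The lift of a projective vector field is a Killing field of the Einstein lift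
metric which moreover preserves the charged symplectic form. -/
theorem projLift_isKilling_and_symplectic
    (U : Set Pt2) (hUopen : IsOpen U)
    (Γ : Conn) (hΓsmooth : ∀ k i j, ContDiffOn ℝ (⊤ : ℕ∞) (Γ k i j) U)
    (hΓsym : ∀ k i j, ∀ x ∈ U, Γ k i j x = Γ k j i x)
    (Λ : ℝ) (hΛ : Λ ≠ 0)
    (K : Fin 2 → Pt2 → ℝ) (hKsmooth : ∀ i, ContDiffOn ℝ (⊤ : ℕ∞) (K i) U)
    (ρ : Fin 2 → Pt2 → ℝ) (hρsmooth : ∀ i, ContDiffOn ℝ (⊤ : ℕ∞) (ρ i) U)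
    (hKproj : ∀ k i j, ∀ x ∈ U, lieConn Γ K k i j x
      = (if k = i then ρ j x else 0) + (if k = j then ρ i x else 0))
    (p : Pt4) (hp : bpt p ∈ U) (a b : Fin 4) :
    lieT (projLift K ρ Λ) (einsteinLift Γ Λ) a b p = 0 ∧
    lieT (projLift K ρ Λ) (chargedSymp Γ Λ) a b p = 0 := by
  classical
  have hU : U ∈ nhds (bpt p) := hUopen.mem_nhds hp
  have hGC : ∀ y ∈ U, ∀ k i j, ContDiffAt ℝ (⊤ : ℕ∞) (Γ k i j) y :=
    fun y hy k i j => (hΓsmooth k i j).contDiffAt (hUopen.mem_nhds hy)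
  have hKCa : ∀ y ∈ U, ∀ i, ContDiffAt ℝ (⊤ : ℕ∞) (K i) y :=
    fun y hy i => (hKsmooth i).contDiffAt (hUopen.mem_nhds hy)
  have hrCa : ∀ y ∈ U, ∀ i, ContDiffAt ℝ (⊤ : ℕ∞) (ρ i) y :=
    fun y hy i => (hρsmooth i).contDiffAt (hUopen.mem_nhds hy)
  have dG : ∀ k i j, DifferentiableAt ℝ (Γ k i j) (bpt p) :=
    fun k i j => (hGC _ hp k i j).differentiableAt (by simp)
  have dG1 : ∀ n k i j, DifferentiableAt ℝ (pd2 n (Γ k i j)) (bpt p) :=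
    fun n k i j => (contDiffAt_pd2 (hGC _ hp k i j) n).differentiableAt (by simp)
  have dK : ∀ i, DifferentiableAt ℝ (K i) (bpt p) :=
    fun i => (hKCa _ hp i).differentiableAt (by simp)
  have dK1 : ∀ n i, DifferentiableAt ℝ (pd2 n (K i)) (bpt p) :=
    fun n i => (contDiffAt_pd2 (hKCa _ hp i) n).differentiableAt (by simp)
  have dK2 : ∀ n m i, DifferentiableAt ℝ (pd2 n (pd2 m (K i))) (bpt p) :=
    fun n m i => (contDiffAt_pd2 (contDiffAt_pd2 (hKCa _ hp i) m) n).differentiableAt (by simp)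
  have dr : ∀ i, DifferentiableAt ℝ (ρ i) (bpt p) :=
    fun i => (hrCa _ hp i).differentiableAt (by simp)
  have dS : ∀ i j, DifferentiableAt ℝ (fun y => schouten Γ i j y) (bpt p) := by
    intro i j
    simp only [schouten, ricciT, curv, Fin.sum_univ_two]
    fun_prop
  have dSsym : ∀ i j, DifferentiableAt ℝ (fun y => (schouten Γ i j y + schouten Γ j i y)/2) (bpt p) :=
    fun i j => by have h1 := dS i j; have h2 := dS j i; fun_prop
  have dSq : DifferentiableAt ℝ (fun y => schouten Γ 0 1 y - schouten Γ 1 0 y) (bpt p) :=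
    by have h1 := dS 0 1; have h2 := dS 1 0; fun_prop
  have hDD0 : ∀ f : Pt2 → ℝ, fderiv ℝ f (bpt p) (bptL (Pi.single 0 1)) = pd2 0 f (bpt p) :=
    fun f => by rw [bptL_single0]; rfl
  have hDD1 : ∀ f : Pt2 → ℝ, fderiv ℝ f (bpt p) (bptL (Pi.single 1 1)) = pd2 1 f (bpt p) :=
    fun f => by rw [bptL_single1]; rfl
  have hDD2 : ∀ f : Pt2 → ℝ, fderiv ℝ f (bpt p) (bptL (Pi.single 2 1)) = 0 :=
    fun f => by rw [bptL_single2]; exact (fderiv ℝ f (bpt p)).map_zero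
  have hDD3 : ∀ f : Pt2 → ℝ, fderiv ℝ f (bpt p) (bptL (Pi.single 3 1)) = 0 :=
    fun f => by rw [bptL_single3]; exact (fderiv ℝ f (bpt p)).map_zero
  have cG : ∀ k, Γ k 1 0 (bpt p) = Γ k 0 1 (bpt p) := fun k => hΓsym k 1 0 _ hp
  have evGsym : ∀ y ∈ U, ∀ k, (Γ k 1 0) =ᶠ[nhds y] (Γ k 0 1) :=
    fun y hy k => Filter.eventually_of_mem (hUopen.mem_nhds hy) (fun z hz => hΓsym k 1 0 z hz)
  have cG1 : ∀ n k, pd2 n (Γ k 1 0) (bpt p) = pd2 n (Γ k 0 1) (bpt p) :=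
    fun n k => pd2_congr_nhds (evGsym _ hp k) n
  have cG2 : ∀ n m k, pd2 n (pd2 m (Γ k 1 0)) (bpt p) = pd2 n (pd2 m (Γ k 0 1)) (bpt p) :=
    fun n m k => pd2_congr_nhds (Filter.eventually_of_mem hU
      (fun y hy => pd2_congr_nhds (evGsym y hy k) m)) n
  have cG2c : ∀ k i j, pd2 1 (pd2 0 (Γ k i j)) (bpt p) = pd2 0 (pd2 1 (Γ k i j)) (bpt p) :=
    fun k i j => pd2_comm (hGC _ hp k i j) 1 0
  have cK2 : ∀ k, pd2 1 (pd2 0 (K k)) (bpt p) = pd2 0 (pd2 1 (K k)) (bpt p) :=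
    fun k => pd2_comm (hKCa _ hp k) 1 0
  have evK2 : ∀ k, (pd2 1 (pd2 0 (K k))) =ᶠ[nhds (bpt p)] (pd2 0 (pd2 1 (K k))) :=
    fun k => Filter.eventually_of_mem hU (fun y hy => pd2_comm (hKCa y hy k) 1 0)
  have cK3a : ∀ k, pd2 1 (pd2 0 (pd2 0 (K k))) (bpt p) = pd2 0 (pd2 0 (pd2 1 (K k))) (bpt p) := by
    intro k
    calc pd2 1 (pd2 0 (pd2 0 (K k))) (bpt p)
        = pd2 0 (pd2 1 (pd2 0 (K k))) (bpt p) := pd2_comm (contDiffAt_pd2 (hKCa _ hp k) 0) 1 0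
      _ = pd2 0 (pd2 0 (pd2 1 (K k))) (bpt p) := pd2_congr_nhds (evK2 k) 0
  have cK3b : ∀ k, pd2 1 (pd2 0 (pd2 1 (K k))) (bpt p) = pd2 0 (pd2 1 (pd2 1 (K k))) (bpt p) :=
    fun k => pd2_comm (contDiffAt_pd2 (hKCa _ hp k) 1) 1 0
  have hinv : Λ * Λ⁻¹ = 1 := mul_inv_cancel₀ hΛ
  have etaK0 : ∀ (n m : Fin 2), pd2 n (fun y => K m y) (bpt p) = pd2 n (K m) (bpt p) := fun _ _ => rfl
  have etaR : ∀ (n m : Fin 2), pd2 n (fun y => ρ m y) (bpt p) = pd2 n (ρ m) (bpt p) := fun _ _ => rfl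
  have etaG : ∀ (n k i j : Fin 2), pd2 n (fun y => Γ k i j y) (bpt p) = pd2 n (Γ k i j) (bpt p) := fun _ _ _ _ => rfl
  have etaG1 : ∀ (n m k i j : Fin 2), pd2 n (fun y => pd2 m (Γ k i j) y) (bpt p) = pd2 n (pd2 m (Γ k i j)) (bpt p) := fun _ _ _ _ _ => rfl
  have etaK1 : ∀ (n m k : Fin 2), pd2 n (fun y => pd2 m (K k) y) (bpt p) = pd2 n (pd2 m (K k)) (bpt p) := fun _ _ _ => rfl
  have etaK3 : ∀ (n i j k : Fin 2), pd2 n (fun y => pd2 i (fun z => pd2 j (K k) z) y) (bpt p) = pd2 n (pd2 i (pd2 j (K k))) (bpt p) := fun _ _ _ _ => rfl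
  have hE000 := hKproj 0 0 0 (bpt p) hp
  simp only [lieConn, Fin.sum_univ_two] at hE000
  norm_num at hE000
  simp only [cG, cG1, cG2, cG2c, cK2, cK3a, cK3b, etaK0, etaR, etaG, etaG1, etaK1, etaK3] at hE000
  have hE001 := hKproj 0 0 1 (bpt p) hp
  simp only [lieConn, Fin.sum_univ_two] at hE001
  norm_num at hE001
  simp only [cG, cG1, cG2, cG2c, cK2, cK3a, cK3b, etaK0, etaR, etaG, etaG1, etaK1, etaK3] at hE001
  have hE011 := hKproj 0 1 1 (bpt p) hp
  simp only [lieConn, Fin.sum_univ_two] at hE011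
  norm_num at hE011
  simp only [cG, cG1, cG2, cG2c, cK2, cK3a, cK3b, etaK0, etaR, etaG, etaG1, etaK1, etaK3] at hE011
  have hE100 := hKproj 1 0 0 (bpt p) hp
  simp only [lieConn, Fin.sum_univ_two] at hE100
  norm_num at hE100
  simp only [cG, cG1, cG2, cG2c, cK2, cK3a, cK3b, etaK0, etaR, etaG, etaG1, etaK1, etaK3] at hE100
  have hE101 := hKproj 1 0 1 (bpt p) hp
  simp only [lieConn, Fin.sum_univ_two] at hE101
  norm_num at hE101
  simp only [cG, cG1, cG2, cG2c, cK2, cK3a, cK3b, etaK0, etaR, etaG, etaG1, etaK1, etaK3] at hE101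
  have hE111 := hKproj 1 1 1 (bpt p) hp
  simp only [lieConn, Fin.sum_univ_two] at hE111
  norm_num at hE111
  simp only [cG, cG1, cG2, cG2c, cK2, cK3a, cK3b, etaK0, etaR, etaG, etaG1, etaK1, etaK3] at hE111
  have lieConn_eq : ∀ k i j : Fin 2, lieConn Γ K k i j = fun y =>
      pd2 i (fun z => pd2 j (K k) z) y
        + ∑ m, (K m y * pd2 m (Γ k i j) y - Γ m i j y * pd2 m (K k) y
            + Γ k i m y * pd2 j (K m) y + Γ k j m y * pd2 i (K m) y) := fun _ _ _ => rfl
  have hEp : ∀ n k i j : Fin 2, pd2 n (lieConn Γ K k i j) (bpt p)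
      = pd2 n (fun y => (if k = i then ρ j y else 0) + (if k = j then ρ i y else 0)) (bpt p) :=
    fun n k i j => pd2_congr_nhds (Filter.eventually_of_mem hU (fun y hy => hKproj k i j y hy)) n
  have hEp0_101 := hEp 0 1 0 1
  rw [lieConn_eq] at hEp0_101
  simp only [Fin.sum_univ_two] at hEp0_101
  norm_num at hEp0_101
  simp (disch := fun_prop) only [pd2_add, pd2_sub, pd2_mul, pd2_const_mul, pd2_div_const, pd2_neg, pd2_const] at hEp0_101
  simp only [cG, cG1, cG2, cG2c, cK2, cK3a, cK3b, etaK0, etaR, etaG, etaG1, etaK1, etaK3] at hEp0_101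
  have hEp1_100 := hEp 1 1 0 0
  rw [lieConn_eq] at hEp1_100
  simp only [Fin.sum_univ_two] at hEp1_100
  norm_num at hEp1_100
  simp (disch := fun_prop) only [pd2_add, pd2_sub, pd2_mul, pd2_const_mul, pd2_div_const, pd2_neg, pd2_const] at hEp1_100
  simp only [cG, cG1, cG2, cG2c, cK2, cK3a, cK3b, etaK0, etaR, etaG, etaG1, etaK1, etaK3] at hEp1_100
  have hEp0_001 := hEp 0 0 0 1
  rw [lieConn_eq] at hEp0_001
  simp only [Fin.sum_univ_two] at hEp0_001
  norm_num at hEp0_001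
  simp (disch := fun_prop) only [pd2_add, pd2_sub, pd2_mul, pd2_const_mul, pd2_div_const, pd2_neg, pd2_const] at hEp0_001
  simp only [cG, cG1, cG2, cG2c, cK2, cK3a, cK3b, etaK0, etaR, etaG, etaG1, etaK1, etaK3] at hEp0_001
  have hEp0_111 := hEp 0 1 1 1
  rw [lieConn_eq] at hEp0_111
  simp only [Fin.sum_univ_two] at hEp0_111
  norm_num at hEp0_111
  simp (disch := fun_prop) only [pd2_add, pd2_sub, pd2_mul, pd2_const_mul, pd2_div_const, pd2_neg, pd2_const] at hEp0_111
  simp only [cG, cG1, cG2, cG2c, cK2, cK3a, cK3b, etaK0, etaR, etaG, etaG1, etaK1, etaK3] at hEp0_111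
  have hEp1_000 := hEp 1 0 0 0
  rw [lieConn_eq] at hEp1_000
  simp only [Fin.sum_univ_two] at hEp1_000
  norm_num at hEp1_000
  simp (disch := fun_prop) only [pd2_add, pd2_sub, pd2_mul, pd2_const_mul, pd2_div_const, pd2_neg, pd2_const] at hEp1_000
  simp only [cG, cG1, cG2, cG2c, cK2, cK3a, cK3b, etaK0, etaR, etaG, etaG1, etaK1, etaK3] at hEp1_000
  have hEp1_101 := hEp 1 1 0 1
  rw [lieConn_eq] at hEp1_101
  simp only [Fin.sum_univ_two] at hEp1_101
  norm_num at hEp1_101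
  simp (disch := fun_prop) only [pd2_add, pd2_sub, pd2_mul, pd2_const_mul, pd2_div_const, pd2_neg, pd2_const] at hEp1_101
  simp only [cG, cG1, cG2, cG2c, cK2, cK3a, cK3b, etaK0, etaR, etaG, etaG1, etaK1, etaK3] at hEp1_101
  have hEp0_011 := hEp 0 0 1 1
  rw [lieConn_eq] at hEp0_011
  simp only [Fin.sum_univ_two] at hEp0_011
  norm_num at hEp0_011
  simp (disch := fun_prop) only [pd2_add, pd2_sub, pd2_mul, pd2_const_mul, pd2_div_const, pd2_neg, pd2_const] at hEp0_011
  simp only [cG, cG1, cG2, cG2c, cK2, cK3a, cK3b, etaK0, etaR, etaG, etaG1, etaK1, etaK3] at hEp0_011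
  have hEp1_001 := hEp 1 0 0 1
  rw [lieConn_eq] at hEp1_001
  simp only [Fin.sum_univ_two] at hEp1_001
  norm_num at hEp1_001
  simp (disch := fun_prop) only [pd2_add, pd2_sub, pd2_mul, pd2_const_mul, pd2_div_const, pd2_neg, pd2_const] at hEp1_001
  simp only [cG, cG1, cG2, cG2c, cK2, cK3a, cK3b, etaK0, etaR, etaG, etaG1, etaK1, etaK3] at hEp1_001
  have hdX0 : ∀ a, pd4 a (projLift K ρ Λ 0) p = fderiv ℝ (K 0) (bpt p) (bptL (Pi.single a 1)) := by
    intro a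
    rw [show projLift K ρ Λ 0 = (fun q => K 0 (bpt q)) from rfl]
    exact SHb (dK 0) a
  have hdX1 : ∀ a, pd4 a (projLift K ρ Λ 1) p = fderiv ℝ (K 1) (bpt p) (bptL (Pi.single a 1)) := by
    intro a
    rw [show projLift K ρ Λ 1 = (fun q => K 1 (bpt q)) from rfl]
    exact SHb (dK 1) a
  have eX2 : projLift K ρ Λ 2 = fun q => -(q 2 * pd2 0 (K 0) (bpt q) + q 3 * pd2 0 (K 1) (bpt q)) + Λ⁻¹ * ρ 0 (bpt q) := by
    funext q; simp [projLift, fib, Fin.sum_univ_two] <;> ring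
  have hdX2 : ∀ a, pd4 a (projLift K ρ Λ 2) p
      = -((p 2 * fderiv ℝ (pd2 0 (K 0)) (bpt p) (bptL (Pi.single a 1))
            + pd2 0 (K 0) (bpt p) * (Pi.single a 1 : Pt4) 2)
          + (p 3 * fderiv ℝ (pd2 0 (K 1)) (bpt p) (bptL (Pi.single a 1))
            + pd2 0 (K 1) (bpt p) * (Pi.single a 1 : Pt4) 3))
        + Λ⁻¹ * fderiv ℝ (ρ 0) (bpt p) (bptL (Pi.single a 1)) := by
    intro a
    rw [eX2]
    exact SHX Λ⁻¹ (dK1 0 0) (dK1 0 1) (dr 0) a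
  have eX3 : projLift K ρ Λ 3 = fun q => -(q 2 * pd2 1 (K 0) (bpt q) + q 3 * pd2 1 (K 1) (bpt q)) + Λ⁻¹ * ρ 1 (bpt q) := by
    funext q; simp [projLift, fib, Fin.sum_univ_two] <;> ring
  have hdX3 : ∀ a, pd4 a (projLift K ρ Λ 3) p
      = -((p 2 * fderiv ℝ (pd2 1 (K 0)) (bpt p) (bptL (Pi.single a 1))
            + pd2 1 (K 0) (bpt p) * (Pi.single a 1 : Pt4) 2)
          + (p 3 * fderiv ℝ (pd2 1 (K 1)) (bpt p) (bptL (Pi.single a 1))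
            + pd2 1 (K 1) (bpt p) * (Pi.single a 1 : Pt4) 3))
        + Λ⁻¹ * fderiv ℝ (ρ 1) (bpt p) (bptL (Pi.single a 1)) := by
    intro a
    rw [eX3]
    exact SHX Λ⁻¹ (dK1 1 0) (dK1 1 1) (dr 1) a
  have eg00 : (fun q => einsteinLift Γ Λ q 0 0) = fun q =>
      -(Γ 0 0 0 (bpt q) * q 2 + Γ 1 0 0 (bpt q) * q 3) + Λ * q 2 * q 2
        + Λ⁻¹ * ((fun y => (schouten Γ 0 0 y + schouten Γ 0 0 y) / 2) (bpt q)) := by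
    funext q; simp [einsteinLift, fib, Fin.sum_univ_two] <;> ring
  have eg01 : (fun q => einsteinLift Γ Λ q 0 1) = fun q =>
      -(Γ 0 0 1 (bpt q) * q 2 + Γ 1 0 1 (bpt q) * q 3) + Λ * q 2 * q 3
        + Λ⁻¹ * ((fun y => (schouten Γ 0 1 y + schouten Γ 1 0 y) / 2) (bpt q)) := by
    funext q; simp [einsteinLift, fib, Fin.sum_univ_two] <;> ring
  have eg10 : (fun q => einsteinLift Γ Λ q 1 0) = fun q =>
      -(Γ 0 1 0 (bpt q) * q 2 + Γ 1 1 0 (bpt q) * q 3) + Λ * q 3 * q 2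
        + Λ⁻¹ * ((fun y => (schouten Γ 1 0 y + schouten Γ 0 1 y) / 2) (bpt q)) := by
    funext q; simp [einsteinLift, fib, Fin.sum_univ_two] <;> ring
  have eg11 : (fun q => einsteinLift Γ Λ q 1 1) = fun q =>
      -(Γ 0 1 1 (bpt q) * q 2 + Γ 1 1 1 (bpt q) * q 3) + Λ * q 3 * q 3
        + Λ⁻¹ * ((fun y => (schouten Γ 1 1 y + schouten Γ 1 1 y) / 2) (bpt q)) := by
    funext q; simp [einsteinLift, fib, Fin.sum_univ_two] <;> ring
  have eW01 : (fun q => chargedSymp Γ Λ q 0 1)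
      = fun q => Λ⁻¹ * ((fun y => schouten Γ 0 1 y - schouten Γ 1 0 y) (bpt q)) := by
    funext q; simp [chargedSymp]
  have hdW01 : ∀ c, pd4 c (fun q => chargedSymp Γ Λ q 0 1) p
      = Λ⁻¹ * fderiv ℝ (fun y => schouten Γ 0 1 y - schouten Γ 1 0 y) (bpt p) (bptL (Pi.single c 1)) := by
    intro c; rw [eW01]; exact SHcm Λ⁻¹ dSq c
  have eW10 : (fun q => chargedSymp Γ Λ q 1 0)
      = fun q => -(Λ⁻¹ * ((fun y => schouten Γ 0 1 y - schouten Γ 1 0 y) (bpt q))) := by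
    funext q; simp [chargedSymp] <;> ring
  have hdW10 : ∀ c, pd4 c (fun q => chargedSymp Γ Λ q 1 0) p
      = -(Λ⁻¹ * fderiv ℝ (fun y => schouten Γ 0 1 y - schouten Γ 1 0 y) (bpt p) (bptL (Pi.single c 1))) := by
    intro c; rw [eW10]; exact SHcmNeg Λ⁻¹ dSq c
  have ha : a = 0 ∨ a = 1 ∨ a = 2 ∨ a = 3 := by omega
  have hb : b = 0 ∨ b = 1 ∨ b = 2 ∨ b = 3 := by omega
  refine ⟨?_, ?_⟩
  · rcases ha with rfl|rfl|rfl|rfl <;> rcases hb with rfl|rfl|rfl|rfl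
    · simp only [lieT, Fin.sum_univ_four]
      rw [eg00]
      simp only [SHg Λ (dG 0 0 0) (dG 1 0 0) (dSsym 0 0) 2 2, hdX0, hdX1, hdX2, hdX3]
      simp only [hDD0, hDD1, hDD2, hDD3]
      simp [einsteinLift, projLift, fib, Fin.sum_univ_two, Pi.single_apply, Matrix.vecHead, Matrix.vecTail, Function.comp]
      simp only [schouten, ricciT, curv, Fin.sum_univ_two]
      simp (disch := fun_prop) only [pd2_add, pd2_sub, pd2_mul, pd2_const_mul, pd2_div_const, pd2_neg, pd2_const]
      simp only [cG, cG1, cG2, cG2c, cK2, cK3a, cK3b, etaK0, etaR, etaG, etaG1, etaK1, etaK3]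
      linear_combination (-(p 2) + Λ⁻¹ * Γ 1 0 1 (bpt p)) * hE000 + (-(Λ⁻¹ * Γ 1 0 0 (bpt p))) * hE001 + (-(p 3) - Λ⁻¹ * Γ 0 0 1 (bpt p) + Λ⁻¹ * Γ 1 1 1 (bpt p)) * hE100 + (Λ⁻¹ * Γ 0 0 0 (bpt p) - 2 * (Λ⁻¹ * Γ 1 0 1 (bpt p))) * hE101 + (Λ⁻¹ * Γ 1 0 0 (bpt p)) * hE111 + (-Λ⁻¹) * hEp0_101 + Λ⁻¹ * hEp1_100 + (2 * (ρ 0 (bpt p) * p 2)) * hinv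
    · simp only [lieT, Fin.sum_univ_four]
      rw [eg01]
      simp only [SHg Λ (dG 0 0 1) (dG 1 0 1) (dSsym 0 1) 2 3, hdX0, hdX1, hdX2, hdX3]
      simp only [hDD0, hDD1, hDD2, hDD3]
      simp [einsteinLift, projLift, fib, Fin.sum_univ_two, Pi.single_apply, Matrix.vecHead, Matrix.vecTail, Function.comp]
      simp only [schouten, ricciT, curv, Fin.sum_univ_two]
      simp (disch := fun_prop) only [pd2_add, pd2_sub, pd2_mul, pd2_const_mul, pd2_div_const, pd2_neg, pd2_const]
      simp only [cG, cG1, cG2, cG2c, cK2, cK3a, cK3b, etaK0, etaR, etaG, etaG1, etaK1, etaK3]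
      linear_combination (-(p 2) + Λ⁻¹ * Γ 1 0 1 (bpt p)) * hE001 + (-(Λ⁻¹ * Γ 1 0 0 (bpt p))) * hE011 + (-(Λ⁻¹ * Γ 0 1 1 (bpt p))) * hE100 + (-(p 3) + Λ⁻¹ * Γ 0 0 1 (bpt p)) * hE101 + (Λ⁻¹/2) * hEp0_001 + (-(Λ⁻¹/2)) * hEp0_111 + (-(Λ⁻¹/2)) * hEp1_000 + (Λ⁻¹/2) * hEp1_101 + (ρ 0 (bpt p) * p 3 + ρ 1 (bpt p) * p 2) * hinv
    · simp only [lieT, Fin.sum_univ_four]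
      rw [show (fun q => einsteinLift Γ Λ q 0 2) = (fun _ : Pt4 => (1/2:ℝ)) from by funext q; simp [einsteinLift, Matrix.vecHead, Matrix.vecTail]]
      simp only [SHc, hdX0, hdX1, hdX2, hdX3, hDD0, hDD1, hDD2, hDD3]
      simp [einsteinLift, projLift, fib, Fin.sum_univ_two, Pi.single_apply, Matrix.vecHead, Matrix.vecTail, Function.comp, cK2]
      try ring
    · simp only [lieT, Fin.sum_univ_four]
      rw [show (fun q => einsteinLift Γ Λ q 0 3) = (fun _ : Pt4 => (0:ℝ)) from by funext q; simp [einsteinLift, Matrix.vecHead, Matrix.vecTail]]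
      simp only [SHc, hdX0, hdX1, hdX2, hdX3, hDD0, hDD1, hDD2, hDD3]
      simp [einsteinLift, projLift, fib, Fin.sum_univ_two, Pi.single_apply, Matrix.vecHead, Matrix.vecTail, Function.comp, cK2]
      try ring
    · simp only [lieT, Fin.sum_univ_four]
      rw [eg10]
      simp only [SHg Λ (dG 0 1 0) (dG 1 1 0) (dSsym 1 0) 3 2, hdX0, hdX1, hdX2, hdX3]
      simp only [hDD0, hDD1, hDD2, hDD3]
      simp [einsteinLift, projLift, fib, Fin.sum_univ_two, Pi.single_apply, Matrix.vecHead, Matrix.vecTail, Function.comp]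
      simp only [schouten, ricciT, curv, Fin.sum_univ_two]
      simp (disch := fun_prop) only [pd2_add, pd2_sub, pd2_mul, pd2_const_mul, pd2_div_const, pd2_neg, pd2_const]
      simp only [cG, cG1, cG2, cG2c, cK2, cK3a, cK3b, etaK0, etaR, etaG, etaG1, etaK1, etaK3]
      linear_combination (-(p 2) + Λ⁻¹ * Γ 1 0 1 (bpt p)) * hE001 + (-(Λ⁻¹ * Γ 1 0 0 (bpt p))) * hE011 + (-(Λ⁻¹ * Γ 0 1 1 (bpt p))) * hE100 + (-(p 3) + Λ⁻¹ * Γ 0 0 1 (bpt p)) * hE101 + (Λ⁻¹/2) * hEp0_001 + (-(Λ⁻¹/2)) * hEp0_111 + (-(Λ⁻¹/2)) * hEp1_000 + (Λ⁻¹/2) * hEp1_101 + (ρ 0 (bpt p) * p 3 + ρ 1 (bpt p) * p 2) * hinv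
    · simp only [lieT, Fin.sum_univ_four]
      rw [eg11]
      simp only [SHg Λ (dG 0 1 1) (dG 1 1 1) (dSsym 1 1) 3 3, hdX0, hdX1, hdX2, hdX3]
      simp only [hDD0, hDD1, hDD2, hDD3]
      simp [einsteinLift, projLift, fib, Fin.sum_univ_two, Pi.single_apply, Matrix.vecHead, Matrix.vecTail, Function.comp]
      simp only [schouten, ricciT, curv, Fin.sum_univ_two]
      simp (disch := fun_prop) only [pd2_add, pd2_sub, pd2_mul, pd2_const_mul, pd2_div_const, pd2_neg, pd2_const]
      simp only [cG, cG1, cG2, cG2c, cK2, cK3a, cK3b, etaK0, etaR, etaG, etaG1, etaK1, etaK3]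
      linear_combination (Λ⁻¹ * Γ 0 1 1 (bpt p)) * hE000 + (-(2 * (Λ⁻¹ * Γ 0 0 1 (bpt p))) + Λ⁻¹ * Γ 1 1 1 (bpt p)) * hE001 + (-(p 2) + Λ⁻¹ * Γ 0 0 0 (bpt p) - Λ⁻¹ * Γ 1 0 1 (bpt p)) * hE011 + (-(Λ⁻¹ * Γ 0 1 1 (bpt p))) * hE101 + (-(p 3) + Λ⁻¹ * Γ 0 0 1 (bpt p)) * hE111 + Λ⁻¹ * hEp0_011 + (-Λ⁻¹) * hEp1_001 + (2 * (ρ 1 (bpt p) * p 3)) * hinv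
    · simp only [lieT, Fin.sum_univ_four]
      rw [show (fun q => einsteinLift Γ Λ q 1 2) = (fun _ : Pt4 => (0:ℝ)) from by funext q; simp [einsteinLift, Matrix.vecHead, Matrix.vecTail]]
      simp only [SHc, hdX0, hdX1, hdX2, hdX3, hDD0, hDD1, hDD2, hDD3]
      simp [einsteinLift, projLift, fib, Fin.sum_univ_two, Pi.single_apply, Matrix.vecHead, Matrix.vecTail, Function.comp, cK2]
      try ring
    · simp only [lieT, Fin.sum_univ_four]
      rw [show (fun q => einsteinLift Γ Λ q 1 3) = (fun _ : Pt4 => (1/2:ℝ)) from by funext q; simp [einsteinLift, Matrix.vecHead, Matrix.vecTail]]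
      simp only [SHc, hdX0, hdX1, hdX2, hdX3, hDD0, hDD1, hDD2, hDD3]
      simp [einsteinLift, projLift, fib, Fin.sum_univ_two, Pi.single_apply, Matrix.vecHead, Matrix.vecTail, Function.comp, cK2]
      try ring
    · simp only [lieT, Fin.sum_univ_four]
      rw [show (fun q => einsteinLift Γ Λ q 2 0) = (fun _ : Pt4 => (1/2:ℝ)) from by funext q; simp [einsteinLift, Matrix.vecHead, Matrix.vecTail]]
      simp only [SHc, hdX0, hdX1, hdX2, hdX3, hDD0, hDD1, hDD2, hDD3]
      simp [einsteinLift, projLift, fib, Fin.sum_univ_two, Pi.single_apply, Matrix.vecHead, Matrix.vecTail, Function.comp, cK2]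
      try ring
    · simp only [lieT, Fin.sum_univ_four]
      rw [show (fun q => einsteinLift Γ Λ q 2 1) = (fun _ : Pt4 => (0:ℝ)) from by funext q; simp [einsteinLift, Matrix.vecHead, Matrix.vecTail]]
      simp only [SHc, hdX0, hdX1, hdX2, hdX3, hDD0, hDD1, hDD2, hDD3]
      simp [einsteinLift, projLift, fib, Fin.sum_univ_two, Pi.single_apply, Matrix.vecHead, Matrix.vecTail, Function.comp, cK2]
      try ring
    · simp only [lieT, Fin.sum_univ_four]
      rw [show (fun q => einsteinLift Γ Λ q 2 2) = (fun _ : Pt4 => (0:ℝ)) from by funext q; simp [einsteinLift, Matrix.vecHead, Matrix.vecTail]]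
      simp only [SHc, hdX0, hdX1, hdX2, hdX3, hDD0, hDD1, hDD2, hDD3]
      simp [einsteinLift, projLift, fib, Fin.sum_univ_two, Pi.single_apply, Matrix.vecHead, Matrix.vecTail, Function.comp, cK2]
      try ring
    · simp only [lieT, Fin.sum_univ_four]
      rw [show (fun q => einsteinLift Γ Λ q 2 3) = (fun _ : Pt4 => (0:ℝ)) from by funext q; simp [einsteinLift, Matrix.vecHead, Matrix.vecTail]]
      simp only [SHc, hdX0, hdX1, hdX2, hdX3, hDD0, hDD1, hDD2, hDD3]
      simp [einsteinLift, projLift, fib, Fin.sum_univ_two, Pi.single_apply, Matrix.vecHead, Matrix.vecTail, Function.comp, cK2]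
      try ring
    · simp only [lieT, Fin.sum_univ_four]
      rw [show (fun q => einsteinLift Γ Λ q 3 0) = (fun _ : Pt4 => (0:ℝ)) from by funext q; simp [einsteinLift, Matrix.vecHead, Matrix.vecTail]]
      simp only [SHc, hdX0, hdX1, hdX2, hdX3, hDD0, hDD1, hDD2, hDD3]
      simp [einsteinLift, projLift, fib, Fin.sum_univ_two, Pi.single_apply, Matrix.vecHead, Matrix.vecTail, Function.comp, cK2]
      try ring
    · simp only [lieT, Fin.sum_univ_four]
      rw [show (fun q => einsteinLift Γ Λ q 3 1) = (fun _ : Pt4 => (1/2:ℝ)) from by funext q; simp [einsteinLift, Matrix.vecHead, Matrix.vecTail]]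
      simp only [SHc, hdX0, hdX1, hdX2, hdX3, hDD0, hDD1, hDD2, hDD3]
      simp [einsteinLift, projLift, fib, Fin.sum_univ_two, Pi.single_apply, Matrix.vecHead, Matrix.vecTail, Function.comp, cK2]
      try ring
    · simp only [lieT, Fin.sum_univ_four]
      rw [show (fun q => einsteinLift Γ Λ q 3 2) = (fun _ : Pt4 => (0:ℝ)) from by funext q; simp [einsteinLift, Matrix.vecHead, Matrix.vecTail]]
      simp only [SHc, hdX0, hdX1, hdX2, hdX3, hDD0, hDD1, hDD2, hDD3]
      simp [einsteinLift, projLift, fib, Fin.sum_univ_two, Pi.single_apply, Matrix.vecHead, Matrix.vecTail, Function.comp, cK2]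
      try ring
    · simp only [lieT, Fin.sum_univ_four]
      rw [show (fun q => einsteinLift Γ Λ q 3 3) = (fun _ : Pt4 => (0:ℝ)) from by funext q; simp [einsteinLift, Matrix.vecHead, Matrix.vecTail]]
      simp only [SHc, hdX0, hdX1, hdX2, hdX3, hDD0, hDD1, hDD2, hDD3]
      simp [einsteinLift, projLift, fib, Fin.sum_univ_two, Pi.single_apply, Matrix.vecHead, Matrix.vecTail, Function.comp, cK2]
      try ring
  · rcases ha with rfl|rfl|rfl|rfl <;> rcases hb with rfl|rfl|rfl|rfl
    · simp only [lieT, Fin.sum_univ_four]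
      rw [show (fun q => chargedSymp Γ Λ q 0 0) = (fun _ : Pt4 => (0:ℝ)) from by funext q; simp [chargedSymp, Matrix.vecHead, Matrix.vecTail]]
      simp only [SHc, hdX0, hdX1, hdX2, hdX3, hDD0, hDD1, hDD2, hDD3]
      simp [chargedSymp, projLift, fib, Fin.sum_univ_two, Pi.single_apply, Matrix.vecHead, Matrix.vecTail, Function.comp, cK2]
      try ring
    · simp only [lieT, Fin.sum_univ_four]
      simp only [hdW01, hdW10, hdX0, hdX1, hdX2, hdX3]
      simp only [hDD0, hDD1, hDD2, hDD3]
      simp [chargedSymp, projLift, fib, Fin.sum_univ_two, Pi.single_apply, Matrix.vecHead, Matrix.vecTail, Function.comp]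
      simp only [schouten, ricciT, curv, Fin.sum_univ_two]
      simp (disch := fun_prop) only [pd2_add, pd2_sub, pd2_mul, pd2_const_mul, pd2_div_const, pd2_neg, pd2_const]
      simp only [cG, cG1, cG2, cG2c, cK2, cK3a, cK3b, etaK0, etaR, etaG, etaG1, etaK1, etaK3]
      linear_combination (-(Λ⁻¹/3)) * hEp0_001 + (-(Λ⁻¹/3)) * hEp0_111 + (Λ⁻¹/3) * hEp1_000 + (Λ⁻¹/3) * hEp1_101
    · simp only [lieT, Fin.sum_univ_four]
      rw [show (fun q => chargedSymp Γ Λ q 0 2) = (fun _ : Pt4 => (-1:ℝ)) from by funext q; simp [chargedSymp, Matrix.vecHead, Matrix.vecTail]]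
      simp only [SHc, hdX0, hdX1, hdX2, hdX3, hDD0, hDD1, hDD2, hDD3]
      simp [chargedSymp, projLift, fib, Fin.sum_univ_two, Pi.single_apply, Matrix.vecHead, Matrix.vecTail, Function.comp, cK2]
      try ring
    · simp only [lieT, Fin.sum_univ_four]
      rw [show (fun q => chargedSymp Γ Λ q 0 3) = (fun _ : Pt4 => (0:ℝ)) from by funext q; simp [chargedSymp, Matrix.vecHead, Matrix.vecTail]]
      simp only [SHc, hdX0, hdX1, hdX2, hdX3, hDD0, hDD1, hDD2, hDD3]
      simp [chargedSymp, projLift, fib, Fin.sum_univ_two, Pi.single_apply, Matrix.vecHead, Matrix.vecTail, Function.comp, cK2]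
      try ring
    · simp only [lieT, Fin.sum_univ_four]
      simp only [hdW01, hdW10, hdX0, hdX1, hdX2, hdX3]
      simp only [hDD0, hDD1, hDD2, hDD3]
      simp [chargedSymp, projLift, fib, Fin.sum_univ_two, Pi.single_apply, Matrix.vecHead, Matrix.vecTail, Function.comp]
      simp only [schouten, ricciT, curv, Fin.sum_univ_two]
      simp (disch := fun_prop) only [pd2_add, pd2_sub, pd2_mul, pd2_const_mul, pd2_div_const, pd2_neg, pd2_const]
      simp only [cG, cG1, cG2, cG2c, cK2, cK3a, cK3b, etaK0, etaR, etaG, etaG1, etaK1, etaK3]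
      linear_combination -((-(Λ⁻¹/3)) * hEp0_001 + (-(Λ⁻¹/3)) * hEp0_111 + (Λ⁻¹/3) * hEp1_000 + (Λ⁻¹/3) * hEp1_101)
    · simp only [lieT, Fin.sum_univ_four]
      rw [show (fun q => chargedSymp Γ Λ q 1 1) = (fun _ : Pt4 => (0:ℝ)) from by funext q; simp [chargedSymp, Matrix.vecHead, Matrix.vecTail]]
      simp only [SHc, hdX0, hdX1, hdX2, hdX3, hDD0, hDD1, hDD2, hDD3]
      simp [chargedSymp, projLift, fib, Fin.sum_univ_two, Pi.single_apply, Matrix.vecHead, Matrix.vecTail, Function.comp, cK2]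
      try ring
    · simp only [lieT, Fin.sum_univ_four]
      rw [show (fun q => chargedSymp Γ Λ q 1 2) = (fun _ : Pt4 => (0:ℝ)) from by funext q; simp [chargedSymp, Matrix.vecHead, Matrix.vecTail]]
      simp only [SHc, hdX0, hdX1, hdX2, hdX3, hDD0, hDD1, hDD2, hDD3]
      simp [chargedSymp, projLift, fib, Fin.sum_univ_two, Pi.single_apply, Matrix.vecHead, Matrix.vecTail, Function.comp, cK2]
      try ring
    · simp only [lieT, Fin.sum_univ_four]
      rw [show (fun q => chargedSymp Γ Λ q 1 3) = (fun _ : Pt4 => (-1:ℝ)) from by funext q; simp [chargedSymp, Matrix.vecHead, Matrix.vecTail]]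
      simp only [SHc, hdX0, hdX1, hdX2, hdX3, hDD0, hDD1, hDD2, hDD3]
      simp [chargedSymp, projLift, fib, Fin.sum_univ_two, Pi.single_apply, Matrix.vecHead, Matrix.vecTail, Function.comp, cK2]
      try ring
    · simp only [lieT, Fin.sum_univ_four]
      rw [show (fun q => chargedSymp Γ Λ q 2 0) = (fun _ : Pt4 => (1:ℝ)) from by funext q; simp [chargedSymp, Matrix.vecHead, Matrix.vecTail]]
      simp only [SHc, hdX0, hdX1, hdX2, hdX3, hDD0, hDD1, hDD2, hDD3]
      simp [chargedSymp, projLift, fib, Fin.sum_univ_two, Pi.single_apply, Matrix.vecHead, Matrix.vecTail, Function.comp, cK2]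
      try ring
    · simp only [lieT, Fin.sum_univ_four]
      rw [show (fun q => chargedSymp Γ Λ q 2 1) = (fun _ : Pt4 => (0:ℝ)) from by funext q; simp [chargedSymp, Matrix.vecHead, Matrix.vecTail]]
      simp only [SHc, hdX0, hdX1, hdX2, hdX3, hDD0, hDD1, hDD2, hDD3]
      simp [chargedSymp, projLift, fib, Fin.sum_univ_two, Pi.single_apply, Matrix.vecHead, Matrix.vecTail, Function.comp, cK2]
      try ring
    · simp only [lieT, Fin.sum_univ_four]
      rw [show (fun q => chargedSymp Γ Λ q 2 2) = (fun _ : Pt4 => (0:ℝ)) from by funext q; simp [chargedSymp, Matrix.vecHead, Matrix.vecTail]]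
      simp only [SHc, hdX0, hdX1, hdX2, hdX3, hDD0, hDD1, hDD2, hDD3]
      simp [chargedSymp, projLift, fib, Fin.sum_univ_two, Pi.single_apply, Matrix.vecHead, Matrix.vecTail, Function.comp, cK2]
      try ring
    · simp only [lieT, Fin.sum_univ_four]
      rw [show (fun q => chargedSymp Γ Λ q 2 3) = (fun _ : Pt4 => (0:ℝ)) from by funext q; simp [chargedSymp, Matrix.vecHead, Matrix.vecTail]]
      simp only [SHc, hdX0, hdX1, hdX2, hdX3, hDD0, hDD1, hDD2, hDD3]
      simp [chargedSymp, projLift, fib, Fin.sum_univ_two, Pi.single_apply, Matrix.vecHead, Matrix.vecTail, Function.comp, cK2]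
      try ring
    · simp only [lieT, Fin.sum_univ_four]
      rw [show (fun q => chargedSymp Γ Λ q 3 0) = (fun _ : Pt4 => (0:ℝ)) from by funext q; simp [chargedSymp, Matrix.vecHead, Matrix.vecTail]]
      simp only [SHc, hdX0, hdX1, hdX2, hdX3, hDD0, hDD1, hDD2, hDD3]
      simp [chargedSymp, projLift, fib, Fin.sum_univ_two, Pi.single_apply, Matrix.vecHead, Matrix.vecTail, Function.comp, cK2]
      try ring
    · simp only [lieT, Fin.sum_univ_four]
      rw [show (fun q => chargedSymp Γ Λ q 3 1) = (fun _ : Pt4 => (1:ℝ)) from by funext q; simp [chargedSymp, Matrix.vecHead, Matrix.vecTail]]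
      simp only [SHc, hdX0, hdX1, hdX2, hdX3, hDD0, hDD1, hDD2, hDD3]
      simp [chargedSymp, projLift, fib, Fin.sum_univ_two, Pi.single_apply, Matrix.vecHead, Matrix.vecTail, Function.comp, cK2]
      try ring
    · simp only [lieT, Fin.sum_univ_four]
      rw [show (fun q => chargedSymp Γ Λ q 3 2) = (fun _ : Pt4 => (0:ℝ)) from by funext q; simp [chargedSymp, Matrix.vecHead, Matrix.vecTail]]
      simp only [SHc, hdX0, hdX1, hdX2, hdX3, hDD0, hDD1, hDD2, hDD3]
      simp [chargedSymp, projLift, fib, Fin.sum_univ_two, Pi.single_apply, Matrix.vecHead, Matrix.vecTail, Function.comp, cK2]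
      try ring
    · simp only [lieT, Fin.sum_univ_four]
      rw [show (fun q => chargedSymp Γ Λ q 3 3) = (fun _ : Pt4 => (0:ℝ)) from by funext q; simp [chargedSymp, Matrix.vecHead, Matrix.vecTail]]
      simp only [SHc, hdX0, hdX1, hdX2, hdX3, hDD0, hDD1, hDD2, hDD3]
      simp [chargedSymp, projLift, fib, Fin.sum_univ_two, Pi.single_apply, Matrix.vecHead, Matrix.vecTail, Function.comp, cK2]
      try ring
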